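/- arXiv:2510.02985 — 2 statements merged into one kernel-verified Lean document; each statement's English description precedes it below -/
import Mathlib

section
/- Let a < b be real numbers and let F : ℝ → ℝ be continuous and strictly decreasing on the closed interval [a, b]. Then there exists exactly one pair (λ, g) ∈ ℝ × ℝ satisfying all of: (i) a ≤ λ ≤ b; (ii) g + F(λ) = 0; (iii) g·(λ − a)·(λ − b) = 0; (iv) if λ = a then g ≥ 0; (v) if λ = b then g ≤ 0. -/
/-- Proposition 2 (existence and uniqueness of Nash equilibrium): there is exactly
one pair `(λ, g)` of market-clearing price and grid exchange satisfying price
feasibility, supply-demand balance, grid-trading complementarity, and the boundary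
direction conditions. -/
theorem stmt_6 (a b : ℝ) (hab : a < b) (F : ℝ → ℝ)
    (hcont : ContinuousOn F (Set.Icc a b))
    (hanti : StrictAntiOn F (Set.Icc a b)) :
    ∃! pg : ℝ × ℝ,
      (a ≤ pg.1 ∧ pg.1 ≤ b) ∧
      pg.2 + F pg.1 = 0 ∧
      pg.2 * (pg.1 - a) * (pg.1 - b) = 0 ∧
      (pg.1 = a → 0 ≤ pg.2) ∧
      (pg.1 = b → pg.2 ≤ 0) := by
  have hab' : a ≤ b := le_of_lt hab
  have ha : a ∈ Set.Icc a b := ⟨le_refl a, hab'⟩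
  have hb : b ∈ Set.Icc a b := ⟨hab', le_refl b⟩
  -- characterization of solutions
  have key : ∀ l g : ℝ, ((a ≤ l ∧ l ≤ b) ∧ g + F l = 0 ∧
      g * (l - a) * (l - b) = 0 ∧ (l = a → 0 ≤ g) ∧ (l = b → g ≤ 0)) →
      ((l = a ∧ F a ≤ 0) ∨ (l = b ∧ 0 ≤ F b) ∨ F l = 0) := by
    rintro l g ⟨⟨h1, h2⟩, hbal, hcomp, hA, hB⟩
    rcases mul_eq_zero.1 hcomp with h | h
    · rcases mul_eq_zero.1 h with h | h
      · right; right; linarith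
      · have hla : l = a := by linarith
        have := hA hla
        left; exact ⟨hla, by rw [← hla]; linarith⟩
    · have hlb : l = b := by linarith
      have := hB hlb
      right; left; exact ⟨hlb, by rw [← hlb]; linarith⟩
  -- uniqueness of the price
  have uniq : ∀ l₁ g₁ l₂ g₂ : ℝ,
      ((a ≤ l₁ ∧ l₁ ≤ b) ∧ g₁ + F l₁ = 0 ∧
        g₁ * (l₁ - a) * (l₁ - b) = 0 ∧ (l₁ = a → 0 ≤ g₁) ∧ (l₁ = b → g₁ ≤ 0)) →
      ((a ≤ l₂ ∧ l₂ ≤ b) ∧ g₂ + F l₂ = 0 ∧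
        g₂ * (l₂ - a) * (l₂ - b) = 0 ∧ (l₂ = a → 0 ≤ g₂) ∧ (l₂ = b → g₂ ≤ 0)) →
      l₁ ≤ l₂ → l₁ = l₂ := by
    intro l₁ g₁ l₂ g₂ h₁ h₂ hle
    by_contra hne
    have hlt : l₁ < l₂ := lt_of_le_of_ne hle hne
    have m₁ : l₁ ∈ Set.Icc a b := ⟨h₁.1.1, h₁.1.2⟩
    have m₂ : l₂ ∈ Set.Icc a b := ⟨h₂.1.1, h₂.1.2⟩
    have hFlt : F l₂ < F l₁ := hanti m₁ m₂ hlt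
    rcases key l₁ g₁ h₁ with ⟨he, hF⟩ | ⟨he, hF⟩ | hF
    · -- l₁ = a, F a ≤ 0, so F l₂ < F a ≤ 0
      rw [← he] at hF
      have : F l₂ < 0 := by linarith
      rcases key l₂ g₂ h₂ with ⟨he2, hF2⟩ | ⟨he2, hF2⟩ | hF2
      · exact absurd (he2 ▸ hlt) (by rw [he]; exact lt_irrefl a |> fun h => h)
      · rw [he2] at this; linarith
      · linarith
    · -- l₁ = b impossible since l₁ < l₂ ≤ b
      rw [he] at hlt; linarith [h₂.1.2]
    · -- F l₁ = 0, so F l₂ < 0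
      have hneg : F l₂ < 0 := by linarith
      rcases key l₂ g₂ h₂ with ⟨he2, hF2⟩ | ⟨he2, hF2⟩ | hF2
      · rw [he2] at hlt; linarith [h₁.1.1]
      · rw [he2] at hneg; linarith
      · linarith
  -- existence
  have exi : ∃ pg : ℝ × ℝ,
      (a ≤ pg.1 ∧ pg.1 ≤ b) ∧ pg.2 + F pg.1 = 0 ∧
      pg.2 * (pg.1 - a) * (pg.1 - b) = 0 ∧
      (pg.1 = a → 0 ≤ pg.2) ∧ (pg.1 = b → pg.2 ≤ 0) := by
    by_cases hFa : F a ≤ 0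
    · exact ⟨(a, -F a), ⟨le_refl a, hab'⟩, by ring, by ring,
        fun _ => by dsimp; linarith, fun h => absurd h (ne_of_lt hab)⟩
    · by_cases hFb : 0 ≤ F b
      · exact ⟨(b, -F b), ⟨hab', le_refl b⟩, by ring, by ring,
          fun h => absurd h.symm (ne_of_lt hab), fun _ => by dsimp; linarith⟩
      · push_neg at hFa hFb
        have : (0:ℝ) ∈ Set.Icc (F b) (F a) := ⟨le_of_lt hFb, le_of_lt hFa⟩
        obtain ⟨l, hl, hFl⟩ := intermediate_value_Icc' hab' hcont this
        exact ⟨(l, 0), ⟨hl.1, hl.2⟩, by simp [hFl], by ring,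
          fun _ => le_refl 0, fun _ => le_refl 0⟩
  obtain ⟨pg, hpg⟩ := exi
  refine ⟨pg, hpg, ?_⟩
  rintro ⟨l, g⟩ h
  have hl : l = pg.1 := by
    rcases le_total l pg.1 with hle | hle
    · exact uniq l g pg.1 pg.2 h hpg hle
    · exact (uniq pg.1 pg.2 l g hpg h hle).symm
  have hg : g = pg.2 := by
    have h1 := h.2.1
    have h2 := hpg.2.1
    rw [hl] at h1; simp at h1 h2; linarith
  exact Prod.ext_iff.mpr ⟨hl, hg⟩
end

section
/- Let F : ℝ → ℝ be continuous and strictly decreasing with F(λ*) = 0, and let σ > 0. Let (λ_k) be defined by an initial value λ_0 and λ_{k+1} = λ_k + σ·F(λ_k), and suppose that either λ_k ≥ λ* for every k or λ_k ≤ λ* for every k. Then for every tolerance δ > 0 there exists a finite index K such that |F(λ_K)| ≤ δ. -/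
/-- Conclusion of the proof of Proposition 3: when all iterates of the price
iteration stay on one side of the equilibrium price `λ*`, the stopping
criterion `|F(λ_K)| ≤ δ` is met after finitely many iterations, for every
tolerance `δ > 0`. -/
theorem stmt_12 (F : ℝ → ℝ) (hcont : Continuous F) (hanti : StrictAnti F)
    (lamStar : ℝ) (hzero : F lamStar = 0) (σ : ℝ) (hσ : 0 < σ)
    (lam₀ : ℝ) (seq : ℕ → ℝ) (h0 : seq 0 = lam₀)
    (hrec : ∀ k, seq (k + 1) = seq k + σ * F (seq k))
    (hside : (∀ k, lamStar ≤ seq k) ∨ (∀ k, seq k ≤ lamStar)) :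
    ∀ δ : ℝ, 0 < δ → ∃ K : ℕ, |F (seq K)| ≤ δ := by
  intro δ hδ
  by_contra h
  push_neg at h
  rcases hside with hs | hs
  · -- F (seq k) ≤ 0, so F (seq k) < -δ, seq decreases by σδ each step
    have hstep : ∀ k, seq (k + 1) ≤ seq k - σ * δ := by
      intro k
      have hle : F (seq k) ≤ 0 := hzero ▸ hanti.antitone (hs k)
      have habs := h k
      have hneg : F (seq k) < -δ := by
        rcases abs_cases (F (seq k)) with ⟨he, _⟩ | ⟨he, _⟩ <;> linarith
      have := hrec k
      nlinarith
    have hbound : ∀ n : ℕ, seq n ≤ seq 0 - n * (σ * δ) := by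
      intro n
      induction n with
      | zero => simp
      | succ n ih =>
        have := hstep n
        push_cast
        linarith
    obtain ⟨n, hn⟩ := exists_nat_gt ((seq 0 - lamStar) / (σ * δ))
    have hσδ : 0 < σ * δ := mul_pos hσ hδ
    have := hbound n
    have := hs n
    rw [div_lt_iff₀ hσδ] at hn
    linarith
  · have hstep : ∀ k, seq k + σ * δ ≤ seq (k + 1) := by
      intro k
      have hle : 0 ≤ F (seq k) := hzero ▸ hanti.antitone (hs k)
      have habs := h k
      have hpos : δ < F (seq k) := by
        rcases abs_cases (F (seq k)) with ⟨he, _⟩ | ⟨he, _⟩ <;> linarith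
      have := hrec k
      nlinarith
    have hbound : ∀ n : ℕ, seq 0 + n * (σ * δ) ≤ seq n := by
      intro n
      induction n with
      | zero => simp
      | succ n ih =>
        have := hstep n
        push_cast
        linarith
    obtain ⟨n, hn⟩ := exists_nat_gt ((lamStar - seq 0) / (σ * δ))
    have hσδ : 0 < σ * δ := mul_pos hσ hδ
    have := hbound n
    have := hs n
    rw [div_lt_iff₀ hσδ] at hn
    linarith
end
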